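/- For discriminating the two extremal channels with side entanglement, it suffices to optimize over the two-dimensional subspace span{|00⟩, |11⟩}: S₂ = ⨆ over pairs (a₀, a₁) ∈ ℂ² with |a₀|² + |a₁|² = 1 of ‖(id⊗N₁)(ρ_w) − (id⊗N₂)(ρ_w)‖₁, where w = a₀·(e₀⊗e₀) + a₁·(e₁⊗e₁) ∈ ℂ⁴ and e₀, e₁ is the standard basis of ℂ². -/

import Mathlib

open Matrix
open scoped Kronecker

noncomputable section

/-- First Kraus operator of the extremal qubit channel `N_{φ,θ}`:
diagonal entries `cos θ` and `cos φ`. -/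
def K0 (φ θ : ℝ) : Matrix (Fin 2) (Fin 2) ℂ :=
  !![(Real.cos θ : ℂ), 0; 0, (Real.cos φ : ℂ)]

/-- Second Kraus operator of the extremal qubit channel `N_{φ,θ}`:
(1,2)-entry `sin φ`, (2,1)-entry `sin θ`. -/
def K1 (φ θ : ℝ) : Matrix (Fin 2) (Fin 2) ℂ :=
  !![0, (Real.sin φ : ℂ); (Real.sin θ : ℂ), 0]

/-- The qubit channel `N_{φ,θ}(ρ) = K₀ ρ K₀* + K₁ ρ K₁*`. -/
def chan (φ θ : ℝ) (ρ : Matrix (Fin 2) (Fin 2) ℂ) : Matrix (Fin 2) (Fin 2) ℂ :=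
  K0 φ θ * ρ * (K0 φ θ)ᴴ + K1 φ θ * ρ * (K1 φ θ)ᴴ

/-- The 2×2 identity matrix. -/
def I2 : Matrix (Fin 2) (Fin 2) ℂ := 1

/-- The channel `id ⊗ N_{φ,θ}` on two qubits, via Kronecker products of the Kraus
operators with the identity. -/
def chanE (φ θ : ℝ) (ρ : Matrix (Fin 2 × Fin 2) (Fin 2 × Fin 2) ℂ) :
    Matrix (Fin 2 × Fin 2) (Fin 2 × Fin 2) ℂ :=
  (I2 ⊗ₖ K0 φ θ) * ρ * (I2 ⊗ₖ K0 φ θ)ᴴ + (I2 ⊗ₖ K1 φ θ) * ρ * (I2 ⊗ₖ K1 φ θ)ᴴ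

open scoped Classical in
/-- Trace norm of a Hermitian matrix: the sum of the absolute values of its
eigenvalues (junk value `0` for non-Hermitian input). -/
def traceNorm {n : Type*} [Fintype n] [DecidableEq n] (M : Matrix n n ℂ) : ℝ :=
  if h : M.IsHermitian then ∑ i, |h.eigenvalues i| else 0

/-- The rank-one projector `ρ_v = v v*` on one qubit. -/
def outer2 (v : EuclideanSpace ℂ (Fin 2)) : Matrix (Fin 2) (Fin 2) ℂ :=
  fun i j => v i * star (v j)

/-- The rank-one projector `ρ_w = w w*` on two qubits. -/
def outer4 (w : EuclideanSpace ℂ (Fin 2 × Fin 2)) :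
    Matrix (Fin 2 × Fin 2) (Fin 2 × Fin 2) ℂ :=
  fun i j => w i * star (w j)

/-- Optimal single-qubit distinguishability of `N_{φ₁,θ₁}` and `N_{φ₂,θ₂}`. -/
def S1 (φ₁ θ₁ φ₂ θ₂ : ℝ) : ℝ :=
  ⨆ v : {v : EuclideanSpace ℂ (Fin 2) // ‖v‖ = 1},
    traceNorm (chan φ₁ θ₁ (outer2 v.1) - chan φ₂ θ₂ (outer2 v.1))

/-- Optimal entanglement-assisted distinguishability of `N_{φ₁,θ₁}` and `N_{φ₂,θ₂}`. -/
def S2 (φ₁ θ₁ φ₂ θ₂ : ℝ) : ℝ :=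
  ⨆ w : {w : EuclideanSpace ℂ (Fin 2 × Fin 2) // ‖w‖ = 1},
    traceNorm (chanE φ₁ θ₁ (outer4 w.1) - chanE φ₂ θ₂ (outer4 w.1))

/-- The two-qubit state `a₀ |00⟩ + a₁ |11⟩`. -/
def wDiag (a₀ a₁ : ℂ) : EuclideanSpace ℂ (Fin 2 × Fin 2) :=
  WithLp.toLp 2 (fun p => if p = ((0 : Fin 2), (0 : Fin 2)) then a₀
    else if p = ((1 : Fin 2), (1 : Fin 2)) then a₁ else 0)

namespace TNAux
set_option linter.unusedSectionVars false

variable {n : Type*} [Fintype n] [DecidableEq n]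

lemma traceNorm_of_isHermitian {A : Matrix n n ℂ} (hA : A.IsHermitian) :
    traceNorm A = ∑ i, |hA.eigenvalues i| := by
  rw [traceNorm, dif_pos hA]

lemma traceNorm_nonneg (A : Matrix n n ℂ) : 0 ≤ traceNorm A := by
  rw [traceNorm]
  split
  · exact Finset.sum_nonneg fun i _ => abs_nonneg _
  · exact le_rfl

/-- contraction in the ℓ² sense -/
def Contr (W : Matrix n n ℂ) : Prop :=
  ∀ x : n → ℂ, ∑ i, Complex.normSq (W.mulVec x i) ≤ ∑ i, Complex.normSq (x i)

lemma cauchySchwarz (u v : n → ℂ) :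
    ‖∑ i, (starRingEnd ℂ) (u i) * v i‖ ≤
      Real.sqrt (∑ i, Complex.normSq (u i)) * Real.sqrt (∑ i, Complex.normSq (v i)) := by
  calc ‖∑ i, (starRingEnd ℂ) (u i) * v i‖
      ≤ ∑ i, ‖(starRingEnd ℂ) (u i) * v i‖ :=
        norm_sum_le _ _
    _ = ∑ i, ‖u i‖ * ‖v i‖ := by
        simp [_root_.map_mul]
    _ ≤ Real.sqrt (∑ i, ‖u i‖ ^ 2) * Real.sqrt (∑ i, ‖v i‖ ^ 2) :=
        Real.sum_mul_le_sqrt_mul_sqrt _ _ _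
    _ = Real.sqrt (∑ i, Complex.normSq (u i)) * Real.sqrt (∑ i, Complex.normSq (v i)) := by
        simp [Complex.sq_norm]

lemma dot_self_eq (y : n → ℂ) :
    star y ⬝ᵥ y = ((∑ i, Complex.normSq (y i) : ℝ) : ℂ) := by
  simp only [dotProduct, Pi.star_apply, Complex.ofReal_sum]
  congr 1
  ext i
  simp [Complex.star_def, Complex.normSq_eq_conj_mul_self]

lemma contr_of_unitary {W : Matrix n n ℂ} (h : Wᴴ * W = 1) : Contr W := by
  intro x
  have key : star (W.mulVec x) ⬝ᵥ (W.mulVec x) = star x ⬝ᵥ x := by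
    rw [Matrix.star_mulVec, dotProduct_mulVec, Matrix.vecMul_vecMul, h,
      Matrix.vecMul_one]
  rw [dot_self_eq, dot_self_eq] at key
  exact le_of_eq (by exact_mod_cast key)

lemma contr_mul {V W : Matrix n n ℂ} (hV : Contr V) (hW : Contr W) : Contr (V * W) := by
  intro x
  rw [← Matrix.mulVec_mulVec]
  exact (hV _).trans (hW x)

/-- duality upper bound -/
lemma re_trace_le_traceNorm {A : Matrix n n ℂ} (hA : A.IsHermitian)
    {C : Matrix n n ℂ} (hC : Contr C) : ((C * A).trace).re ≤ traceNorm A := by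
  set U : Matrix n n ℂ := (hA.eigenvectorUnitary : Matrix n n ℂ) with hUdef
  have hU1 : star U * U = 1 := Unitary.coe_star_mul_self hA.eigenvectorUnitary
  set M : Matrix n n ℂ := star U * C * U with hMdef
  -- column norms of U
  have hcol : ∀ i, ∑ k, Complex.normSq (U k i) = 1 := by
    intro i
    have h := congrFun (congrFun hU1 i) i
    have h1 : (star U * U) i i = ∑ k, (starRingEnd ℂ) (U k i) * U k i := by
      simp [Matrix.mul_apply, Matrix.star_apply, Complex.star_def]
    have h2 : (∑ k, (starRingEnd ℂ) (U k i) * U k i) = ((∑ k, Complex.normSq (U k i) : ℝ) : ℂ) := by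
      rw [Complex.ofReal_sum]
      congr 1; ext k; simp [Complex.normSq_eq_conj_mul_self]
    rw [h1, h2] at h
    have h3 : ((∑ k, Complex.normSq (U k i) : ℝ) : ℂ) = 1 := by
      rw [h]; simp [Matrix.one_apply]
    exact_mod_cast h3
  have hMdiag : ∀ i, ‖M i i‖ ≤ 1 := by
    intro i
    have hexp : M i i = ∑ k, (starRingEnd ℂ) (U k i) * (C.mulVec (fun j => U j i)) k := by
      simp [hMdef, Matrix.mul_apply, Matrix.mulVec, dotProduct,
        Matrix.star_apply, Complex.star_def, Matrix.mul_assoc]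
    rw [hexp]
    have := cauchySchwarz (fun k => U k i) (C.mulVec (fun j => U j i))
    refine this.trans ?_
    have hle : ∑ k, Complex.normSq (C.mulVec (fun j => U j i) k) ≤
        ∑ k, Complex.normSq (U k i) := hC _
    calc Real.sqrt (∑ k, Complex.normSq (U k i)) *
          Real.sqrt (∑ k, Complex.normSq (C.mulVec (fun j => U j i) k))
        ≤ Real.sqrt (∑ k, Complex.normSq (U k i)) *
          Real.sqrt (∑ k, Complex.normSq (U k i)) := by
          exact mul_le_mul_of_nonneg_left (Real.sqrt_le_sqrt hle) (Real.sqrt_nonneg _)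
      _ = 1 := by rw [hcol i]; simp
  have htr : (C * A).trace = ∑ i, M i i * ((hA.eigenvalues i : ℝ) : ℂ) := by
    conv_lhs => rw [hA.spectral_theorem, Unitary.conjStarAlgAut_apply]
    rw [show C * ((hA.eigenvectorUnitary : Matrix n n ℂ) *
          Matrix.diagonal (RCLike.ofReal ∘ hA.eigenvalues) *
          star (hA.eigenvectorUnitary : Matrix n n ℂ))
        = (C * U) * Matrix.diagonal (RCLike.ofReal ∘ hA.eigenvalues) * star U by
      rw [hUdef]; rw [← Matrix.mul_assoc, ← Matrix.mul_assoc]]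
    rw [Matrix.trace_mul_cycle]
    rw [show star U * (C * U) = M by rw [hMdef, Matrix.mul_assoc]]
    simp [Matrix.trace, Matrix.diag, Matrix.mul_diagonal, Function.comp]
  rw [htr, traceNorm_of_isHermitian hA, Complex.re_sum]
  refine Finset.sum_le_sum fun i _ => ?_
  have : (M i i * ((hA.eigenvalues i : ℝ) : ℂ)).re = (M i i).re * hA.eigenvalues i := by
    simp [Complex.mul_re]
  rw [this]
  calc (M i i).re * hA.eigenvalues i ≤ |(M i i).re * hA.eigenvalues i| := le_abs_self _
    _ = |(M i i).re| * |hA.eigenvalues i| := abs_mul _ _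
    _ ≤ 1 * |hA.eigenvalues i| := by
        refine mul_le_mul_of_nonneg_right ?_ (abs_nonneg _)
        exact (Complex.abs_re_le_norm _).trans (hMdiag i)
    _ = |hA.eigenvalues i| := one_mul _


/-- existence of an optimal dual witness -/
lemma exists_witness {A : Matrix n n ℂ} (hA : A.IsHermitian) :
    ∃ W : Matrix n n ℂ, Contr W ∧ Contr Wᴴ ∧ (W * A).trace = ((traceNorm A : ℝ) : ℂ) := by

  classical
  set U : Matrix n n ℂ := (hA.eigenvectorUnitary : Matrix n n ℂ) with hUdef
  have hU1 : star U * U = 1 := Unitary.coe_star_mul_self hA.eigenvectorUnitary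
  have hU2 : U * star U = 1 := Unitary.coe_mul_star_self hA.eigenvectorUnitary
  set s : n → ℂ := fun i => if hA.eigenvalues i < 0 then -1 else 1 with hsdef
  have hss : ∀ i, (starRingEnd ℂ) (s i) * s i = 1 := by
    intro i
    by_cases h : hA.eigenvalues i < 0 <;> simp [hsdef, h]
  have hss' : ∀ i, s i * (starRingEnd ℂ) (s i) = 1 := by
    intro i
    by_cases h : hA.eigenvalues i < 0 <;> simp [hsdef, h]
  set W : Matrix n n ℂ := U * Matrix.diagonal s * star U with hWdef
  have hWH : Wᴴ = U * Matrix.diagonal (fun i => (starRingEnd ℂ) (s i)) * star U := by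
    simp only [hWdef, Matrix.conjTranspose_mul, Matrix.diagonal_conjTranspose,
      Matrix.star_eq_conjTranspose, Matrix.conjTranspose_conjTranspose, Matrix.mul_assoc,
      Pi.star_def, Complex.star_def]
  have hWHW : Wᴴ * W = 1 := by
    rw [hWH, hWdef]
    calc U * Matrix.diagonal (fun i => (starRingEnd ℂ) (s i)) * star U *
          (U * Matrix.diagonal s * star U)
        = U * (Matrix.diagonal (fun i => (starRingEnd ℂ) (s i)) * ((star U * U) *
            (Matrix.diagonal s * star U))) := by
          simp only [Matrix.mul_assoc]
      _ = U * (Matrix.diagonal (fun i => (starRingEnd ℂ) (s i)) * Matrix.diagonal s) * star U := by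
          rw [hU1, Matrix.one_mul]; simp only [Matrix.mul_assoc]
      _ = U * star U := by
          rw [Matrix.diagonal_mul_diagonal]
          have : (fun i => (starRingEnd ℂ) (s i) * s i) = fun _ => (1 : ℂ) := by
            funext i; exact hss i
          rw [this, Matrix.diagonal_one, Matrix.mul_one]
      _ = 1 := hU2
  have hWWH : W * Wᴴ = 1 := by
    rw [hWH, hWdef]
    calc U * Matrix.diagonal s * star U *
          (U * Matrix.diagonal (fun i => (starRingEnd ℂ) (s i)) * star U)
        = U * (Matrix.diagonal s * ((star U * U) *
            (Matrix.diagonal (fun i => (starRingEnd ℂ) (s i)) * star U))) := by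
          simp only [Matrix.mul_assoc]
      _ = U * (Matrix.diagonal s * Matrix.diagonal (fun i => (starRingEnd ℂ) (s i))) * star U := by
          rw [hU1, Matrix.one_mul]; simp only [Matrix.mul_assoc]
      _ = U * star U := by
          rw [Matrix.diagonal_mul_diagonal]
          have : (fun i => s i * (starRingEnd ℂ) (s i)) = fun _ => (1 : ℂ) := by
            funext i; exact hss' i
          rw [this, Matrix.diagonal_one, Matrix.mul_one]
      _ = 1 := hU2
  refine ⟨W, contr_of_unitary hWHW, contr_of_unitary (by rw [Matrix.conjTranspose_conjTranspose]; exact hWWH), ?_⟩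
  have htr : W * A = U * Matrix.diagonal (fun i => s i * ((hA.eigenvalues i : ℝ) : ℂ)) * star U := by
    conv_lhs => rw [hA.spectral_theorem]
    rw [hWdef]
    calc U * Matrix.diagonal s * star U *
          ((hA.eigenvectorUnitary : Matrix n n ℂ) *
            Matrix.diagonal (RCLike.ofReal ∘ hA.eigenvalues) *
            star (hA.eigenvectorUnitary : Matrix n n ℂ))
        = U * (Matrix.diagonal s * ((star U * U) *
            (Matrix.diagonal (RCLike.ofReal ∘ hA.eigenvalues) * star U))) := by
          rw [← hUdef]; simp only [Matrix.mul_assoc]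
      _ = U * (Matrix.diagonal s * Matrix.diagonal (RCLike.ofReal ∘ hA.eigenvalues)) * star U := by
          rw [hU1, Matrix.one_mul]; simp only [Matrix.mul_assoc]
      _ = U * Matrix.diagonal (fun i => s i * ((hA.eigenvalues i : ℝ) : ℂ)) * star U := by
          rw [Matrix.diagonal_mul_diagonal]
          rfl
  rw [htr]
  rw [Matrix.trace_mul_cycle, hU1, Matrix.one_mul, Matrix.trace_diagonal]
  rw [traceNorm_of_isHermitian hA, Complex.ofReal_sum]
  congr 1
  ext i
  by_cases h : hA.eigenvalues i < 0
  · simp [hsdef, h, abs_of_neg h]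
  · simp [hsdef, h, abs_of_nonneg (not_lt.mp h)]


lemma traceNorm_add_le {A B : Matrix n n ℂ} (hA : A.IsHermitian) (hB : B.IsHermitian) :
    traceNorm (A + B) ≤ traceNorm A + traceNorm B := by
  obtain ⟨W, hW, -, htr⟩ := exists_witness (hA.add hB)
  have h0 : traceNorm (A + B) = ((W * (A + B)).trace).re := by rw [htr]; simp
  rw [h0, Matrix.mul_add, Matrix.trace_add, Complex.add_re]
  exact add_le_add (re_trace_le_traceNorm hA hW) (re_trace_le_traceNorm hB hW)

lemma traceNorm_conj {A V : Matrix n n ℂ} (hA : A.IsHermitian)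
    (h1 : Vᴴ * V = 1) (h2 : V * Vᴴ = 1) :
    traceNorm (V * A * Vᴴ) = traceNorm A := by
  have hVC : Contr V := contr_of_unitary h1
  have hVHC : Contr Vᴴ := contr_of_unitary
    (by rw [Matrix.conjTranspose_conjTranspose]; exact h2)
  have hAc : (V * A * Vᴴ).IsHermitian := Matrix.isHermitian_mul_mul_conjTranspose V hA
  apply le_antisymm
  · obtain ⟨W, hW, -, htr⟩ := exists_witness hAc
    have h0 : traceNorm (V * A * Vᴴ) = ((W * (V * A * Vᴴ)).trace).re := by rw [htr]; simp
    rw [h0]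
    have e1 : (W * (V * A * Vᴴ)).trace = ((Vᴴ * W * V) * A).trace := by
      rw [show W * (V * A * Vᴴ) = (W * V * A) * Vᴴ by simp only [Matrix.mul_assoc]]
      rw [Matrix.trace_mul_cycle]
      simp only [Matrix.mul_assoc]
    rw [e1]
    exact re_trace_le_traceNorm hA (contr_mul (contr_mul hVHC hW) hVC)
  · obtain ⟨W, hW, -, htr⟩ := exists_witness hA
    have h0 : traceNorm A = ((W * A).trace).re := by rw [htr]; simp
    rw [h0]
    have e1 : (W * A).trace = ((V * W * Vᴴ) * (V * A * Vᴴ)).trace := by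
      have e2 : (V * W * Vᴴ) * (V * A * Vᴴ) = V * (W * A) * Vᴴ := by
        calc (V * W * Vᴴ) * (V * A * Vᴴ)
            = V * (W * ((Vᴴ * V) * (A * Vᴴ))) := by simp only [Matrix.mul_assoc]
          _ = V * (W * A) * Vᴴ := by rw [h1, Matrix.one_mul]; simp only [Matrix.mul_assoc]
      rw [e2, Matrix.trace_mul_cycle, ← Matrix.mul_assoc, h1, Matrix.one_mul]
    rw [e1]
    exact re_trace_le_traceNorm hAc (contr_mul (contr_mul hVC hW) hVHC)

lemma traceNorm_block {s : n → Prop} [DecidablePred s] {A B : Matrix n n ℂ}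
    (hA : A.IsHermitian) (hB : B.IsHermitian)
    (hAs : ∀ p q, ¬(s p ∧ s q) → A p q = 0)
    (hBs : ∀ p q, ¬(¬s p ∧ ¬s q) → B p q = 0) :
    traceNorm (A + B) = traceNorm A + traceNorm B := by
  refine le_antisymm (traceNorm_add_le hA hB) ?_
  obtain ⟨WA, hWA, -, htrA⟩ := exists_witness hA
  obtain ⟨WB, hWB, -, htrB⟩ := exists_witness hB
  set W : Matrix n n ℂ := Matrix.of (fun p q =>
    if s p ∧ s q then WA p q else if ¬s p ∧ ¬s q then WB p q else 0) with hWdef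
  set xS : (n → ℂ) → (n → ℂ) := fun x q => if s q then x q else 0 with hxS
  set xSc : (n → ℂ) → (n → ℂ) := fun x q => if s q then 0 else x q with hxSc
  have hContr : Contr W := by
    intro x
    have hmv : ∀ p, W.mulVec x p =
        if s p then WA.mulVec (xS x) p else WB.mulVec (xSc x) p := by
      intro p
      by_cases hp : s p
      · rw [if_pos hp]
        simp only [Matrix.mulVec, dotProduct, hWdef, Matrix.of_apply]
        apply Finset.sum_congr rfl
        intro q _
        by_cases hq : s q <;> simp [hp, hq, hxS]
      · rw [if_neg hp]
        simp only [Matrix.mulVec, dotProduct, hWdef, Matrix.of_apply]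
        apply Finset.sum_congr rfl
        intro q _
        by_cases hq : s q <;> simp [hp, hq, hxSc]
    calc ∑ p, Complex.normSq (W.mulVec x p)
        ≤ ∑ p, (Complex.normSq (WA.mulVec (xS x) p) + Complex.normSq (WB.mulVec (xSc x) p)) := by
          apply Finset.sum_le_sum
          intro p _
          rw [hmv p]
          by_cases hp : s p
          · rw [if_pos hp]; exact le_add_of_nonneg_right (Complex.normSq_nonneg _)
          · rw [if_neg hp]; exact le_add_of_nonneg_left (Complex.normSq_nonneg _)
      _ = ∑ p, Complex.normSq (WA.mulVec (xS x) p) +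
            ∑ p, Complex.normSq (WB.mulVec (xSc x) p) := Finset.sum_add_distrib
      _ ≤ ∑ q, Complex.normSq (xS x q) + ∑ q, Complex.normSq (xSc x q) :=
          add_le_add (hWA (xS x)) (hWB (xSc x))
      _ = ∑ q, Complex.normSq (x q) := by
          rw [← Finset.sum_add_distrib]
          apply Finset.sum_congr rfl
          intro q _
          by_cases hq : s q <;> simp [hxS, hxSc, hq]
  have eA : (W * A).trace = (WA * A).trace := by
    simp only [Matrix.trace, Matrix.diag, Matrix.mul_apply]
    apply Finset.sum_congr rfl; intro p _
    apply Finset.sum_congr rfl; intro q _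
    by_cases h : s q ∧ s p
    · have : W p q = WA p q := by simp [hWdef, h.1, h.2]
      rw [this]
    · rw [hAs q p h, mul_zero, mul_zero]
  have eB : (W * B).trace = (WB * B).trace := by
    simp only [Matrix.trace, Matrix.diag, Matrix.mul_apply]
    apply Finset.sum_congr rfl; intro p _
    apply Finset.sum_congr rfl; intro q _
    by_cases h : ¬s q ∧ ¬s p
    · have : W p q = WB p q := by simp [hWdef, h.1, h.2]
      rw [this]
    · rw [hBs q p h, mul_zero, mul_zero]
  have key : ((W * (A + B)).trace).re = traceNorm A + traceNorm B := by
    rw [Matrix.mul_add, Matrix.trace_add, eA, eB, htrA, htrB, ← Complex.ofReal_add]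
    simp
  have := re_trace_le_traceNorm (hA.add hB) hContr
  rw [key] at this
  exact this

lemma traceNorm_le_sum_abs (A : Matrix n n ℂ) :
    traceNorm A ≤ ∑ p, ∑ q, ‖A p q‖ := by
  by_cases hA : A.IsHermitian
  · obtain ⟨W, hW, -, htr⟩ := exists_witness hA
    have hent : ∀ p q, ‖W p q‖ ≤ 1 := by
      intro p q
      have h1 : W.mulVec ((Pi.single q (1:ℂ) : n → ℂ)) = fun i => W i q := by
        rw [Matrix.mulVec_single]; simp; rfl
      have hle := hW ((Pi.single q (1:ℂ) : n → ℂ))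
      rw [h1] at hle
      have h2 : ∑ i, Complex.normSq ((Pi.single q (1:ℂ) : n → ℂ) i) = 1 := by
        have : ∀ i, Complex.normSq ((Pi.single q (1:ℂ) : n → ℂ) i) = if i = q then 1 else 0 := by
          intro i
          by_cases hiq : i = q <;> simp [Pi.single_apply, hiq]
        simp [this]
      rw [h2] at hle
      have h3 : Complex.normSq (W p q) ≤ 1 :=
        le_trans (Finset.single_le_sum (f := fun i => Complex.normSq (W i q))
          (fun i _ => Complex.normSq_nonneg _) (Finset.mem_univ p)) hle
      rw [← Complex.sq_norm] at h3
      nlinarith [norm_nonneg (W p q)]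
    have h0 : traceNorm A = ((W * A).trace).re := by rw [htr]; simp
    rw [h0]
    have s1 : ((W * A).trace).re ≤ ‖(W * A).trace‖ := Complex.re_le_norm _
    have s2 : ‖(W * A).trace‖ ≤ ∑ p, ‖(W * A) p p‖ := by
      have : (W * A).trace = ∑ p, (W * A) p p := rfl
      rw [this]
      exact norm_sum_le _ _
    have s3 : ∀ p, ‖(W * A) p p‖ ≤ ∑ q, ‖A q p‖ := by
      intro p
      rw [Matrix.mul_apply]
      refine le_trans (norm_sum_le _ _) ?_
      apply Finset.sum_le_sum
      intro q _
      rw [norm_mul]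
      calc ‖W p q‖ * ‖A q p‖
          ≤ 1 * ‖A q p‖ :=
            mul_le_mul_of_nonneg_right (hent p q) (norm_nonneg _)
        _ = ‖A q p‖ := one_mul _
    have s4 : ∑ p, ‖(W * A) p p‖ ≤ ∑ p, ∑ q, ‖A q p‖ :=
      Finset.sum_le_sum fun p _ => s3 p
    have s5 : (∑ p, ∑ q, ‖A q p‖) = ∑ p, ∑ q, ‖A p q‖ :=
      Finset.sum_comm
    exact le_trans s1 (le_trans s2 (le_trans s4 (le_of_eq s5)))
  · rw [traceNorm, dif_neg hA]
    positivity

end TNAux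
section App

open TNAux

/-- rank-one matrix built from a vector -/
def outerM {n : Type*} (u : n → ℂ) : Matrix n n ℂ :=
  Matrix.of fun p q => u p * star (u q)

lemma outerM_isHermitian {n : Type*} (u : n → ℂ) : (outerM u).IsHermitian := by
  ext p q
  simp only [outerM, Matrix.conjTranspose_apply, Matrix.of_apply, star_mul', star_star]
  ring

lemma mul_outerM {n : Type*} [Fintype n] (W : Matrix n n ℂ) (u : n → ℂ) :
    W * outerM u * Wᴴ = outerM (W.mulVec u) := by
  ext p q
  simp only [outerM, Matrix.mul_apply, Matrix.of_apply, Matrix.conjTranspose_apply,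
    Matrix.mulVec, dotProduct]
  calc ∑ s, (∑ r, W p r * (u r * star (u s))) * star (W q s)
      = ∑ s, ∑ r, (W p r * u r) * (star (u s) * star (W q s)) := by
        apply Finset.sum_congr rfl
        intro s _
        rw [Finset.sum_mul]
        apply Finset.sum_congr rfl
        intro r _
        ring
    _ = (∑ r, W p r * u r) * ∑ s, star (W q s * u s) := by
        rw [Finset.mul_sum]
        apply Finset.sum_congr rfl
        intro s _
        rw [Finset.sum_mul, star_mul']
        apply Finset.sum_congr rfl
        intro r _
        ring
    _ = (∑ r, W p r * u r) * star (∑ s, W q s * u s) := by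
        rw [star_sum]
  done

lemma outer4_eq_outerM (v : EuclideanSpace ℂ (Fin 2 × Fin 2)) : outer4 v = outerM v := rfl

lemma chanE_outer (φ θ : ℝ) (v : EuclideanSpace ℂ (Fin 2 × Fin 2)) :
    chanE φ θ (outer4 v) =
      outerM ((I2 ⊗ₖ K0 φ θ).mulVec v) + outerM ((I2 ⊗ₖ K1 φ θ).mulVec v) := by
  rw [chanE, outer4_eq_outerM, ← mul_outerM, ← mul_outerM]

lemma kron_mulVec (M : Matrix (Fin 2) (Fin 2) ℂ) (x : (Fin 2 × Fin 2) → ℂ) (i j : Fin 2) :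
    ((I2 ⊗ₖ M).mulVec x) (i, j) = M j 0 * x (i, 0) + M j 1 * x (i, 1) := by
  simp [Matrix.mulVec, dotProduct, Fintype.sum_prod_type, I2, Matrix.one_apply,
    Fin.sum_univ_two, Matrix.kroneckerMap_apply]

/-- block-diagonal (over the second tensor factor) combination of two 2×2 matrices -/
def dsum (V0 V1 : Matrix (Fin 2) (Fin 2) ℂ) : Matrix (Fin 2 × Fin 2) (Fin 2 × Fin 2) ℂ :=
  Matrix.of fun p q => if p.2 = q.2 then (if p.2 = 0 then V0 else V1) p.1 q.1 else 0

lemma dsum_mulVec (V0 V1 : Matrix (Fin 2) (Fin 2) ℂ) (x : (Fin 2 × Fin 2) → ℂ) (i j : Fin 2) :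
    ((dsum V0 V1).mulVec x) (i, j) =
      (if j = 0 then V0 else V1) i 0 * x (0, j) + (if j = 0 then V0 else V1) i 1 * x (1, j) := by
  simp [Matrix.mulVec, dotProduct, Fintype.sum_prod_type, dsum,
    Fin.sum_univ_two]

lemma dsum_conjTranspose (V0 V1 : Matrix (Fin 2) (Fin 2) ℂ) :
    (dsum V0 V1)ᴴ = dsum V0ᴴ V1ᴴ := by
  ext ⟨i, j⟩ ⟨k, l⟩
  simp only [Matrix.conjTranspose_apply, dsum, Matrix.of_apply]
  by_cases h : j = l
  · subst h
    by_cases h0 : j = 0 <;> simp [h0, Matrix.conjTranspose_apply]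
  · have h' : ¬ l = j := fun h'' => h h''.symm
    simp [h, h']

lemma dsum_mul (A B C D : Matrix (Fin 2) (Fin 2) ℂ) :
    dsum A B * dsum C D = dsum (A * C) (B * D) := by
  ext ⟨i, j⟩ ⟨k, l⟩
  simp only [Matrix.mul_apply, dsum, Matrix.of_apply, Fintype.sum_prod_type, Fin.sum_univ_two]
  by_cases h : j = l
  · subst h
    fin_cases j <;> simp [Matrix.mul_apply, Fin.sum_univ_two]
  · fin_cases j <;> fin_cases l <;> simp_all

lemma dsum_one : dsum 1 1 = (1 : Matrix (Fin 2 × Fin 2) (Fin 2 × Fin 2) ℂ) := by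
  ext ⟨i, j⟩ ⟨k, l⟩
  simp only [dsum, Matrix.of_apply, Matrix.one_apply, Prod.mk.injEq]
  by_cases h : j = l
  · subst h
    by_cases h2 : i = k <;> simp [h2]
  · simp [h]

lemma exists_unitary_to_e0 (b : Fin 2 → ℂ) :
    ∃ V : Matrix (Fin 2) (Fin 2) ℂ, Vᴴ * V = 1 ∧ V * Vᴴ = 1 ∧
      V.mulVec b = fun i => if i = 0 then
        ((Real.sqrt (Complex.normSq (b 0) + Complex.normSq (b 1)) : ℝ) : ℂ) else 0 := by
  by_cases hb : b = 0
  · refine ⟨1, by simp, by simp, ?_⟩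
    subst hb
    funext i
    simp [Matrix.mulVec_zero]
  · set β : ℝ := Real.sqrt (Complex.normSq (b 0) + Complex.normSq (b 1)) with hβ
    have hnn : 0 ≤ Complex.normSq (b 0) + Complex.normSq (b 1) :=
      add_nonneg (Complex.normSq_nonneg _) (Complex.normSq_nonneg _)
    have hb01 : b 0 ≠ 0 ∨ b 1 ≠ 0 := by
      by_contra hcon
      push_neg at hcon
      exact hb (funext fun i => by fin_cases i <;> simp [hcon.1, hcon.2])
    have hpos : 0 < Complex.normSq (b 0) + Complex.normSq (b 1) := by
      rcases hb01 with h | h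
      · have := Complex.normSq_pos.mpr h
        nlinarith [Complex.normSq_nonneg (b 1)]
      · have := Complex.normSq_pos.mpr h
        nlinarith [Complex.normSq_nonneg (b 0)]
    have hβpos : 0 < β := Real.sqrt_pos.mpr hpos
    have hβne : (β : ℂ) ≠ 0 := Complex.ofReal_ne_zero.mpr hβpos.ne'
    have hβsq : (β : ℂ) * (β : ℂ) = ((Complex.normSq (b 0) : ℝ) : ℂ) + ((Complex.normSq (b 1) : ℝ) : ℂ) := by
      rw [← Complex.ofReal_mul, Real.mul_self_sqrt hnn, Complex.ofReal_add]
    clear_value β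
    refine ⟨!![(starRingEnd ℂ) (b 0) / β, (starRingEnd ℂ) (b 1) / β; -(b 1) / β, b 0 / β],
      ?_, ?_, ?_⟩
    · ext i j
      fin_cases i <;> fin_cases j <;>
      · simp only [Matrix.mul_apply, Matrix.conjTranspose_apply, Fin.sum_univ_two,
          Matrix.cons_val', Matrix.cons_val_zero, Matrix.cons_val_one, Matrix.head_cons,
          Matrix.empty_val', Matrix.cons_val_fin_one, Matrix.of_apply, Matrix.head_fin_const,
          Matrix.one_apply, map_div₀, Complex.conj_conj, Complex.conj_ofReal, map_neg,
          Fin.zero_eta, Fin.mk_one, Complex.star_def, zero_ne_one, one_ne_zero,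
          eq_self_iff_true, if_true, if_false]
        field_simp
        simp only [Complex.normSq_eq_conj_mul_self] at hβsq ⊢
        first
          | ring1
          | linear_combination hβsq
          | linear_combination -hβsq
          | linear_combination hβsq.symm
          | linear_combination (-1 : ℂ) * hβsq
    · ext i j
      fin_cases i <;> fin_cases j <;>
      · simp only [Matrix.mul_apply, Matrix.conjTranspose_apply, Fin.sum_univ_two,
          Matrix.cons_val', Matrix.cons_val_zero, Matrix.cons_val_one, Matrix.head_cons,
          Matrix.empty_val', Matrix.cons_val_fin_one, Matrix.of_apply, Matrix.head_fin_const,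
          Matrix.one_apply, map_div₀, Complex.conj_conj, Complex.conj_ofReal, map_neg,
          Fin.zero_eta, Fin.mk_one, Complex.star_def, zero_ne_one, one_ne_zero,
          eq_self_iff_true, if_true, if_false]
        field_simp
        simp only [Complex.normSq_eq_conj_mul_self] at hβsq ⊢
        first
          | ring1
          | linear_combination hβsq
          | linear_combination -hβsq
          | linear_combination hβsq.symm
          | linear_combination (-1 : ℂ) * hβsq
    · funext i
      fin_cases i <;>
      · simp only [Matrix.mulVec, dotProduct, Fin.sum_univ_two,
          Matrix.cons_val', Matrix.cons_val_zero, Matrix.cons_val_one, Matrix.head_cons,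
          Matrix.empty_val', Matrix.cons_val_fin_one, Matrix.of_apply, Matrix.head_fin_const,
          Fin.zero_eta, Fin.mk_one, Complex.star_def, zero_ne_one, one_ne_zero,
          eq_self_iff_true, if_true, if_false]
        field_simp
        simp only [Complex.normSq_eq_conj_mul_self] at hβsq ⊢
        first
          | ring1
          | linear_combination hβsq
          | linear_combination -hβsq
          | linear_combination hβsq.symm
          | linear_combination (-1 : ℂ) * hβsq

lemma exists_unitary_to_e1 (c : Fin 2 → ℂ) :
    ∃ V : Matrix (Fin 2) (Fin 2) ℂ, Vᴴ * V = 1 ∧ V * Vᴴ = 1 ∧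
      V.mulVec c = fun i => if i = 1 then
        ((Real.sqrt (Complex.normSq (c 0) + Complex.normSq (c 1)) : ℝ) : ℂ) else 0 := by
  obtain ⟨V, h1, h2, h3⟩ := exists_unitary_to_e0 c
  set X : Matrix (Fin 2) (Fin 2) ℂ := !![0, 1; 1, 0] with hX
  have hXH : Xᴴ = X := by
    ext i j
    fin_cases i <;> fin_cases j <;> simp [hX, Matrix.conjTranspose_apply]
  have hXX : X * X = 1 := by
    ext i j
    fin_cases i <;> fin_cases j <;>
      simp [hX, Matrix.mul_apply, Fin.sum_univ_two, Matrix.one_apply]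
  refine ⟨X * V, ?_, ?_, ?_⟩
  · calc (X * V)ᴴ * (X * V)
        = Vᴴ * ((Xᴴ * X) * V) := by
          rw [Matrix.conjTranspose_mul]; simp only [Matrix.mul_assoc]
      _ = 1 := by rw [hXH, hXX, Matrix.one_mul, h1]
  · calc (X * V) * (X * V)ᴴ
        = X * ((V * Vᴴ) * Xᴴ) := by
          rw [Matrix.conjTranspose_mul]; simp only [Matrix.mul_assoc]
      _ = 1 := by rw [h2, Matrix.one_mul, hXH, hXX]
  · rw [← Matrix.mulVec_mulVec, h3]
    funext i
    fin_cases i <;>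
      simp [hX, Matrix.mulVec, dotProduct, Fin.sum_univ_two]

lemma sum_normSq_eq_one (w : EuclideanSpace ℂ (Fin 2 × Fin 2)) (hw : ‖w‖ = 1) :
    ∑ p : Fin 2 × Fin 2, Complex.normSq (w p) = 1 := by
  have h := EuclideanSpace.norm_eq w
  rw [hw] at h
  have hnn : 0 ≤ ∑ i : Fin 2 × Fin 2, ‖w i‖ ^ 2 :=
    Finset.sum_nonneg fun i _ => sq_nonneg _
  have h2 : ∑ i : Fin 2 × Fin 2, ‖w i‖ ^ 2 = 1 := by
    have := Real.sq_sqrt hnn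
    rw [← h] at this
    simpa using this.symm
  rw [← h2]
  apply Finset.sum_congr rfl
  intro p _
  rw [Complex.normSq_eq_norm_sq]

lemma unit_abs_le (w : EuclideanSpace ℂ (Fin 2 × Fin 2)) (hw : ‖w‖ = 1) (p : Fin 2 × Fin 2) :
    ‖w p‖ ≤ 1 := by
  have h := sum_normSq_eq_one w hw
  have h2 : Complex.normSq (w p) ≤ 1 := by
    rw [← h]
    exact Finset.single_le_sum (f := fun q => Complex.normSq (w q))
      (fun q _ => Complex.normSq_nonneg _) (Finset.mem_univ p)
  rw [← Complex.sq_norm] at h2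
  nlinarith [norm_nonneg (w p)]

lemma wDiag_abs_le {a₀ a₁ : ℂ} (h : ‖a₀‖ ^ 2 + ‖a₁‖ ^ 2 = 1) (p : Fin 2 × Fin 2) :
    ‖wDiag a₀ a₁ p‖ ≤ 1 := by
  have h0 : ‖a₀‖ ≤ 1 := by
    have := sq_nonneg ‖a₁‖
    nlinarith [norm_nonneg a₀]
  have h1 : ‖a₁‖ ≤ 1 := by
    have := sq_nonneg ‖a₀‖
    nlinarith [norm_nonneg a₁]
  rw [wDiag, WithLp.ofLp_toLp]
  split
  · exact h0
  · split
    · exact h1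
    · simp

lemma norm_wDiag {a₀ a₁ : ℂ} (h : ‖a₀‖ ^ 2 + ‖a₁‖ ^ 2 = 1) : ‖wDiag a₀ a₁‖ = 1 := by
  rw [EuclideanSpace.norm_eq]
  have hsum : ∑ p : Fin 2 × Fin 2, ‖wDiag a₀ a₁ p‖ ^ 2 = ‖a₀‖ ^ 2 + ‖a₁‖ ^ 2 := by
    rw [Fintype.sum_prod_type, Fin.sum_univ_two, Fin.sum_univ_two, Fin.sum_univ_two]
    have e00 : wDiag a₀ a₁ (0, 0) = a₀ := by simp [wDiag]
    have e01 : wDiag a₀ a₁ (0, 1) = 0 := by simp [wDiag]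
    have e10 : wDiag a₀ a₁ (1, 0) = 0 := by simp [wDiag]
    have e11 : wDiag a₀ a₁ (1, 1) = a₁ := by simp [wDiag]
    rw [e00, e01, e10, e11]
    simp
  rw [hsum, h, Real.sqrt_one]

lemma abs_kron_mulVec_le (M : Matrix (Fin 2) (Fin 2) ℂ)
    (hM : ∀ j l : Fin 2, ‖M j l‖ ≤ 1)
    (hM2 : ∀ j : Fin 2, M j 0 = 0 ∨ M j 1 = 0)
    (v : EuclideanSpace ℂ (Fin 2 × Fin 2)) (hv : ∀ p, ‖v p‖ ≤ 1)
    (p : Fin 2 × Fin 2) :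
    ‖((I2 ⊗ₖ M).mulVec v) p‖ ≤ 1 := by
  obtain ⟨i, j⟩ := p
  rw [kron_mulVec]
  rcases hM2 j with h | h
  · rw [h, zero_mul, zero_add, norm_mul]
    nlinarith [hM j 1, hv (i, 1), norm_nonneg (M j 1), norm_nonneg (v (i, 1))]
  · rw [h, zero_mul, add_zero, norm_mul]
    nlinarith [hM j 0, hv (i, 0), norm_nonneg (M j 0), norm_nonneg (v (i, 0))]

lemma K0_abs_le (φ θ : ℝ) : ∀ j l : Fin 2, ‖K0 φ θ j l‖ ≤ 1 := by
  intro j l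
  have e00 : K0 φ θ 0 0 = ((Real.cos θ : ℝ) : ℂ) := by simp [K0]
  have e11 : K0 φ θ 1 1 = ((Real.cos φ : ℝ) : ℂ) := by simp [K0]
  fin_cases j <;> fin_cases l
  · simp only [Fin.zero_eta, Fin.isValue]; rw [e00, Complex.norm_real, Real.norm_eq_abs]; exact Real.abs_cos_le_one θ
  · simp [K0]
  · simp [K0]
  · simp only [Fin.mk_one, Fin.isValue]; rw [e11, Complex.norm_real, Real.norm_eq_abs]; exact Real.abs_cos_le_one φ
lemma K0_zero (φ θ : ℝ) : ∀ j : Fin 2, K0 φ θ j 0 = 0 ∨ K0 φ θ j 1 = 0 := by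
  intro j
  fin_cases j
  · right; simp [K0]
  · left; simp [K0]
lemma K1_abs_le (φ θ : ℝ) : ∀ j l : Fin 2, ‖K1 φ θ j l‖ ≤ 1 := by
  intro j l
  have e01 : K1 φ θ 0 1 = ((Real.sin φ : ℝ) : ℂ) := by simp [K1]
  have e10 : K1 φ θ 1 0 = ((Real.sin θ : ℝ) : ℂ) := by simp [K1]
  fin_cases j <;> fin_cases l
  · simp [K1]
  · simp only [Fin.zero_eta, Fin.mk_one, Fin.isValue]; rw [e01, Complex.norm_real, Real.norm_eq_abs]; exact Real.abs_sin_le_one φ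
  · simp only [Fin.zero_eta, Fin.mk_one, Fin.isValue]; rw [e10, Complex.norm_real, Real.norm_eq_abs]; exact Real.abs_sin_le_one θ
  · simp [K1]
lemma K1_zero (φ θ : ℝ) : ∀ j : Fin 2, K1 φ θ j 0 = 0 ∨ K1 φ θ j 1 = 0 := by
  intro j
  fin_cases j
  · left; simp [K1]
  · right; simp [K1]

lemma chanE_diff_bound (φ₁ θ₁ φ₂ θ₂ : ℝ) (v : EuclideanSpace ℂ (Fin 2 × Fin 2))
    (hv : ∀ p, ‖v p‖ ≤ 1) :
    traceNorm (chanE φ₁ θ₁ (outer4 v) - chanE φ₂ θ₂ (outer4 v)) ≤ 64 := by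
  refine (traceNorm_le_sum_abs _).trans ?_
  have hent : ∀ p q, ‖(chanE φ₁ θ₁ (outer4 v) - chanE φ₂ θ₂ (outer4 v)) p q‖ ≤ 4 := by
    intro p q
    rw [chanE_outer, chanE_outer]
    simp only [Matrix.sub_apply, Matrix.add_apply, outerM, Matrix.of_apply]
    have habs : ∀ (M : Matrix (Fin 2) (Fin 2) ℂ), (∀ j l, ‖M j l‖ ≤ 1) →
        (∀ j : Fin 2, M j 0 = 0 ∨ M j 1 = 0) →
        ‖((I2 ⊗ₖ M).mulVec v) p * star (((I2 ⊗ₖ M).mulVec v) q)‖ ≤ 1 := by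
      intro M h1 h2
      rw [norm_mul]
      have ha := abs_kron_mulVec_le M h1 h2 v hv p
      have hb : ‖star (((I2 ⊗ₖ M).mulVec v) q)‖ ≤ 1 := by
        rw [Complex.star_def, Complex.norm_conj]
        exact abs_kron_mulVec_le M h1 h2 v hv q
      nlinarith [norm_nonneg (((I2 ⊗ₖ M).mulVec v) p),
        norm_nonneg (star (((I2 ⊗ₖ M).mulVec v) q))]
    have t1 := habs _ (K0_abs_le φ₁ θ₁) (K0_zero φ₁ θ₁)
    have t2 := habs _ (K1_abs_le φ₁ θ₁) (K1_zero φ₁ θ₁)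
    have t3 := habs _ (K0_abs_le φ₂ θ₂) (K0_zero φ₂ θ₂)
    have t4 := habs _ (K1_abs_le φ₂ θ₂) (K1_zero φ₂ θ₂)
    set x1 := ((I2 ⊗ₖ K0 φ₁ θ₁).mulVec v) p * star (((I2 ⊗ₖ K0 φ₁ θ₁).mulVec v) q)
    set x2 := ((I2 ⊗ₖ K1 φ₁ θ₁).mulVec v) p * star (((I2 ⊗ₖ K1 φ₁ θ₁).mulVec v) q)
    set x3 := ((I2 ⊗ₖ K0 φ₂ θ₂).mulVec v) p * star (((I2 ⊗ₖ K0 φ₂ θ₂).mulVec v) q)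
    set x4 := ((I2 ⊗ₖ K1 φ₂ θ₂).mulVec v) p * star (((I2 ⊗ₖ K1 φ₂ θ₂).mulVec v) q)
    calc ‖x1 + x2 - (x3 + x4)‖
        ≤ ‖x1 + x2‖ + ‖x3 + x4‖ := by
          rw [sub_eq_add_neg]
          refine (norm_add_le _ _).trans (le_of_eq ?_)
          rw [norm_neg]
      _ ≤ (‖x1‖ + ‖x2‖) + (‖x3‖ + ‖x4‖) :=
          add_le_add (norm_add_le _ _) (norm_add_le _ _)
      _ ≤ 4 := by
          have := t1; have := t2; have := t3; have := t4
          linarith [t1, t2, t3, t4]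
  calc ∑ p : Fin 2 × Fin 2, ∑ q : Fin 2 × Fin 2,
        ‖(chanE φ₁ θ₁ (outer4 v) - chanE φ₂ θ₂ (outer4 v)) p q‖
      ≤ ∑ _p : Fin 2 × Fin 2, ∑ _q : Fin 2 × Fin 2, (4 : ℝ) :=
        Finset.sum_le_sum fun p _ => Finset.sum_le_sum fun q _ => hent p q
    _ = 64 := by simp; norm_num

lemma eK0_00 (φ θ : ℝ) : K0 φ θ 0 0 = ((Real.cos θ : ℝ) : ℂ) := by simp [K0]
lemma eK0_01 (φ θ : ℝ) : K0 φ θ 0 1 = 0 := by simp [K0]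
lemma eK0_10 (φ θ : ℝ) : K0 φ θ 1 0 = 0 := by simp [K0]
lemma eK0_11 (φ θ : ℝ) : K0 φ θ 1 1 = ((Real.cos φ : ℝ) : ℂ) := by simp [K0]
lemma eK1_00 (φ θ : ℝ) : K1 φ θ 0 0 = 0 := by simp [K1]
lemma eK1_01 (φ θ : ℝ) : K1 φ θ 0 1 = ((Real.sin φ : ℝ) : ℂ) := by simp [K1]
lemma eK1_10 (φ θ : ℝ) : K1 φ θ 1 0 = ((Real.sin θ : ℝ) : ℂ) := by simp [K1]
lemma eK1_11 (φ θ : ℝ) : K1 φ θ 1 1 = 0 := by simp [K1]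

lemma key (θ₁ φ₁ θ₂ φ₂ : ℝ) (w : EuclideanSpace ℂ (Fin 2 × Fin 2)) (hw : ‖w‖ = 1) :
    ∃ a : ℂ × ℂ, ‖a.1‖ ^ 2 + ‖a.2‖ ^ 2 = 1 ∧
      traceNorm (chanE φ₁ θ₁ (outer4 w) - chanE φ₂ θ₂ (outer4 w)) ≤
        traceNorm (chanE φ₁ θ₁ (outer4 (wDiag a.1 a.2)) -
          chanE φ₂ θ₂ (outer4 (wDiag a.1 a.2))) := by
  classical
  obtain ⟨Vb, hVb1, hVb2, hVbvec⟩ := exists_unitary_to_e0 (fun i => w (i, 0))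
  obtain ⟨Vc, hVc1, hVc2, hVcvec⟩ := exists_unitary_to_e1 (fun i => w (i, 1))
  have hb0 := congrFun hVbvec 0
  have hb1 := congrFun hVbvec 1
  have hc0 := congrFun hVcvec 0
  have hc1 := congrFun hVcvec 1
  simp only [Matrix.mulVec, dotProduct, Fin.sum_univ_two] at hb0 hb1 hc0 hc1
  norm_num at hb0 hb1 hc0 hc1
  set β : ℝ := Real.sqrt (Complex.normSq (w (0, 0)) + Complex.normSq (w (1, 0))) with hβdef
  set γ : ℝ := Real.sqrt (Complex.normSq (w (0, 1)) + Complex.normSq (w (1, 1))) with hγdef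
  set wd : EuclideanSpace ℂ (Fin 2 × Fin 2) := wDiag (β : ℂ) (γ : ℂ) with hwddef
  have hwd00 : wd (0, 0) = (β : ℂ) := by simp [hwddef, wDiag]
  have hwd11 : wd (1, 1) = (γ : ℂ) := by simp [hwddef, wDiag, Prod.mk.injEq]
  have hwd01 : wd (0, 1) = 0 := by simp [hwddef, wDiag, Prod.mk.injEq]
  have hwd10 : wd (1, 0) = 0 := by simp [hwddef, wDiag, Prod.mk.injEq]
  clear_value β γ wd
  have hW01 : (dsum Vb Vc)ᴴ * dsum Vb Vc = 1 := by
    rw [dsum_conjTranspose, dsum_mul, hVb1, hVc1, dsum_one]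
  have hW02 : dsum Vb Vc * (dsum Vb Vc)ᴴ = 1 := by
    rw [dsum_conjTranspose, dsum_mul, hVb2, hVc2, dsum_one]
  have hW11 : (dsum Vc Vb)ᴴ * dsum Vc Vb = 1 := by
    rw [dsum_conjTranspose, dsum_mul, hVc1, hVb1, dsum_one]
  have hW12 : dsum Vc Vb * (dsum Vc Vb)ᴴ = 1 := by
    rw [dsum_conjTranspose, dsum_mul, hVc2, hVb2, dsum_one]
  have hid0 : ∀ φ θ : ℝ, (I2 ⊗ₖ K0 φ θ).mulVec wd =
      (dsum Vb Vc).mulVec ((I2 ⊗ₖ K0 φ θ).mulVec w) := by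
    intro φ θ
    funext p
    obtain ⟨i, j⟩ := p
    fin_cases i <;> fin_cases j <;>
      simp only [Fin.zero_eta, Fin.mk_one, Fin.isValue] <;>
      rw [kron_mulVec, dsum_mulVec, kron_mulVec, kron_mulVec] <;>
      simp only [eK0_00, eK0_01, eK0_10, eK0_11, hwd00, hwd01, hwd10, hwd11,
        if_true, ite_true, eq_self_iff_true, one_ne_zero, if_false, ite_false,
        Fin.isValue, Fin.one_eq_zero_iff, OfNat.ofNat_ne_one, ite_eq_right_iff] <;>
      norm_num <;>
      first
        | linear_combination Complex.cos (θ : ℂ) * hb0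
        | linear_combination Complex.cos (θ : ℂ) * hb1
        | linear_combination Complex.cos (φ : ℂ) * hc0
        | linear_combination Complex.cos (φ : ℂ) * hc1
        | linear_combination Complex.cos (θ : ℂ) * hb0.symm
        | linear_combination Complex.cos (θ : ℂ) * hb1.symm
        | linear_combination Complex.cos (φ : ℂ) * hc0.symm
        | linear_combination Complex.cos (φ : ℂ) * hc1.symm
        | linear_combination ((Real.cos θ : ℝ) : ℂ) * hb0
        | linear_combination ((Real.cos θ : ℝ) : ℂ) * hb1
        | linear_combination ((Real.cos φ : ℝ) : ℂ) * hc0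
        | linear_combination ((Real.cos φ : ℝ) : ℂ) * hc1
        | ring1
  have hid1 : ∀ φ θ : ℝ, (I2 ⊗ₖ K1 φ θ).mulVec wd =
      (dsum Vc Vb).mulVec ((I2 ⊗ₖ K1 φ θ).mulVec w) := by
    intro φ θ
    funext p
    obtain ⟨i, j⟩ := p
    fin_cases i <;> fin_cases j <;>
      simp only [Fin.zero_eta, Fin.mk_one, Fin.isValue] <;>
      rw [kron_mulVec, dsum_mulVec, kron_mulVec, kron_mulVec] <;>
      simp only [eK1_00, eK1_01, eK1_10, eK1_11, hwd00, hwd01, hwd10, hwd11,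
        if_true, ite_true, eq_self_iff_true, one_ne_zero, if_false, ite_false,
        Fin.isValue, Fin.one_eq_zero_iff, OfNat.ofNat_ne_one, ite_eq_right_iff] <;>
      norm_num <;>
      first
        | linear_combination Complex.sin (φ : ℂ) * hc0
        | linear_combination Complex.sin (φ : ℂ) * hc1
        | linear_combination Complex.sin (θ : ℂ) * hb0
        | linear_combination Complex.sin (θ : ℂ) * hb1
        | linear_combination Complex.sin (φ : ℂ) * hc0.symm
        | linear_combination Complex.sin (φ : ℂ) * hc1.symm
        | linear_combination Complex.sin (θ : ℂ) * hb0.symm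
        | linear_combination Complex.sin (θ : ℂ) * hb1.symm
        | linear_combination ((Real.sin φ : ℝ) : ℂ) * hc0
        | linear_combination ((Real.sin φ : ℝ) : ℂ) * hc1
        | linear_combination ((Real.sin θ : ℝ) : ℂ) * hb0
        | linear_combination ((Real.sin θ : ℝ) : ℂ) * hb1
        | ring1
  -- trace-norm equalities for the two halves
  have tnA : traceNorm (outerM ((I2 ⊗ₖ K0 φ₁ θ₁).mulVec wd) -
        outerM ((I2 ⊗ₖ K0 φ₂ θ₂).mulVec wd)) =
      traceNorm (outerM ((I2 ⊗ₖ K0 φ₁ θ₁).mulVec w) -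
        outerM ((I2 ⊗ₖ K0 φ₂ θ₂).mulVec w)) := by
    rw [hid0 φ₁ θ₁, hid0 φ₂ θ₂,
      ← mul_outerM (dsum Vb Vc) ((I2 ⊗ₖ K0 φ₁ θ₁).mulVec w),
      ← mul_outerM (dsum Vb Vc) ((I2 ⊗ₖ K0 φ₂ θ₂).mulVec w),
      ← Matrix.sub_mul, ← Matrix.mul_sub]
    exact traceNorm_conj ((outerM_isHermitian _).sub (outerM_isHermitian _)) hW01 hW02
  have tnB : traceNorm (outerM ((I2 ⊗ₖ K1 φ₁ θ₁).mulVec wd) -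
        outerM ((I2 ⊗ₖ K1 φ₂ θ₂).mulVec wd)) =
      traceNorm (outerM ((I2 ⊗ₖ K1 φ₁ θ₁).mulVec w) -
        outerM ((I2 ⊗ₖ K1 φ₂ θ₂).mulVec w)) := by
    rw [hid1 φ₁ θ₁, hid1 φ₂ θ₂,
      ← mul_outerM (dsum Vc Vb) ((I2 ⊗ₖ K1 φ₁ θ₁).mulVec w),
      ← mul_outerM (dsum Vc Vb) ((I2 ⊗ₖ K1 φ₂ θ₂).mulVec w),
      ← Matrix.sub_mul, ← Matrix.mul_sub]
    exact traceNorm_conj ((outerM_isHermitian _).sub (outerM_isHermitian _)) hW11 hW12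
  -- support facts
  have hz0 : ∀ (φ θ : ℝ) (r : Fin 2 × Fin 2), ¬ (r.1 = r.2) →
      ((I2 ⊗ₖ K0 φ θ).mulVec wd) r = 0 := by
    intro φ θ r hr
    obtain ⟨i, j⟩ := r
    fin_cases i <;> fin_cases j
    · exact absurd rfl hr
    · rw [kron_mulVec]
      simp only [Fin.zero_eta, Fin.mk_one, Fin.isValue]
      rw [eK0_10, eK0_11, hwd01]
      ring
    · rw [kron_mulVec]
      simp only [Fin.zero_eta, Fin.mk_one, Fin.isValue]
      rw [eK0_00, eK0_01, hwd10]
      ring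
    · exact absurd rfl hr
  have hz1 : ∀ (φ θ : ℝ) (r : Fin 2 × Fin 2), (r.1 = r.2) →
      ((I2 ⊗ₖ K1 φ θ).mulVec wd) r = 0 := by
    intro φ θ r hr
    obtain ⟨i, j⟩ := r
    fin_cases i <;> fin_cases j
    · rw [kron_mulVec]
      simp only [Fin.zero_eta, Fin.mk_one, Fin.isValue]
      rw [eK1_00, eK1_01, hwd01]
      ring
    · exact absurd hr (by decide)
    · exact absurd hr (by decide)
    · rw [kron_mulVec]
      simp only [Fin.zero_eta, Fin.mk_one, Fin.isValue]
      rw [eK1_10, eK1_11, hwd10]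
      ring
  have hsupA : ∀ p q : Fin 2 × Fin 2, ¬((p.1 = p.2) ∧ (q.1 = q.2)) →
      (outerM ((I2 ⊗ₖ K0 φ₁ θ₁).mulVec wd) - outerM ((I2 ⊗ₖ K0 φ₂ θ₂).mulVec wd)) p q = 0 := by
    intro p q h
    rcases not_and_or.mp h with hp | hq
    · simp [outerM, Matrix.sub_apply, hz0 φ₁ θ₁ p hp, hz0 φ₂ θ₂ p hp]
    · simp [outerM, Matrix.sub_apply, hz0 φ₁ θ₁ q hq, hz0 φ₂ θ₂ q hq]
  have hsupB : ∀ p q : Fin 2 × Fin 2, ¬(¬(p.1 = p.2) ∧ ¬(q.1 = q.2)) →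
      (outerM ((I2 ⊗ₖ K1 φ₁ θ₁).mulVec wd) - outerM ((I2 ⊗ₖ K1 φ₂ θ₂).mulVec wd)) p q = 0 := by
    intro p q h
    rcases not_and_or.mp h with hp | hq
    · rw [not_not] at hp
      simp [outerM, Matrix.sub_apply, hz1 φ₁ θ₁ p hp, hz1 φ₂ θ₂ p hp]
    · rw [not_not] at hq
      simp [outerM, Matrix.sub_apply, hz1 φ₁ θ₁ q hq, hz1 φ₂ θ₂ q hq]
  have hblock := traceNorm_block (s := fun p : Fin 2 × Fin 2 => p.1 = p.2)
    ((outerM_isHermitian _).sub (outerM_isHermitian _))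
    ((outerM_isHermitian _).sub (outerM_isHermitian _)) hsupA hsupB
  refine ⟨((β : ℂ), (γ : ℂ)), ?_, ?_⟩
  · show ‖((β : ℝ) : ℂ)‖ ^ 2 + ‖((γ : ℝ) : ℂ)‖ ^ 2 = 1
    simp only [Complex.norm_real, Real.norm_eq_abs]
    have hnb : 0 ≤ Complex.normSq (w (0, 0)) + Complex.normSq (w (1, 0)) :=
      add_nonneg (Complex.normSq_nonneg _) (Complex.normSq_nonneg _)
    have hnc : 0 ≤ Complex.normSq (w (0, 1)) + Complex.normSq (w (1, 1)) :=
      add_nonneg (Complex.normSq_nonneg _) (Complex.normSq_nonneg _)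
    have hβ2 : |β| ^ 2 = Complex.normSq (w (0, 0)) + Complex.normSq (w (1, 0)) := by
      rw [sq_abs, hβdef]
      exact Real.sq_sqrt hnb
    have hγ2 : |γ| ^ 2 = Complex.normSq (w (0, 1)) + Complex.normSq (w (1, 1)) := by
      rw [sq_abs, hγdef]
      exact Real.sq_sqrt hnc
    have htot := sum_normSq_eq_one w hw
    rw [Fintype.sum_prod_type, Fin.sum_univ_two, Fin.sum_univ_two, Fin.sum_univ_two] at htot
    rw [hβ2, hγ2]
    linarith
  · show traceNorm (chanE φ₁ θ₁ (outer4 w) - chanE φ₂ θ₂ (outer4 w)) ≤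
      traceNorm (chanE φ₁ θ₁ (outer4 (wDiag (β : ℂ) (γ : ℂ))) -
        chanE φ₂ θ₂ (outer4 (wDiag (β : ℂ) (γ : ℂ))))
    rw [← hwddef]
    have hDw : chanE φ₁ θ₁ (outer4 w) - chanE φ₂ θ₂ (outer4 w) =
        (outerM ((I2 ⊗ₖ K0 φ₁ θ₁).mulVec w) - outerM ((I2 ⊗ₖ K0 φ₂ θ₂).mulVec w)) +
        (outerM ((I2 ⊗ₖ K1 φ₁ θ₁).mulVec w) - outerM ((I2 ⊗ₖ K1 φ₂ θ₂).mulVec w)) := by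
      rw [chanE_outer, chanE_outer, sub_add_sub_comm]
    have hDd : chanE φ₁ θ₁ (outer4 wd) - chanE φ₂ θ₂ (outer4 wd) =
        (outerM ((I2 ⊗ₖ K0 φ₁ θ₁).mulVec wd) - outerM ((I2 ⊗ₖ K0 φ₂ θ₂).mulVec wd)) +
        (outerM ((I2 ⊗ₖ K1 φ₁ θ₁).mulVec wd) - outerM ((I2 ⊗ₖ K1 φ₂ θ₂).mulVec wd)) := by
      rw [chanE_outer, chanE_outer, sub_add_sub_comm]
    rw [hDw, hDd]
    calc traceNorm
          ((outerM ((I2 ⊗ₖ K0 φ₁ θ₁).mulVec w) - outerM ((I2 ⊗ₖ K0 φ₂ θ₂).mulVec w)) +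
           (outerM ((I2 ⊗ₖ K1 φ₁ θ₁).mulVec w) - outerM ((I2 ⊗ₖ K1 φ₂ θ₂).mulVec w)))
        ≤ traceNorm (outerM ((I2 ⊗ₖ K0 φ₁ θ₁).mulVec w) - outerM ((I2 ⊗ₖ K0 φ₂ θ₂).mulVec w)) +
          traceNorm (outerM ((I2 ⊗ₖ K1 φ₁ θ₁).mulVec w) - outerM ((I2 ⊗ₖ K1 φ₂ θ₂).mulVec w)) :=
          traceNorm_add_le ((outerM_isHermitian _).sub (outerM_isHermitian _))
            ((outerM_isHermitian _).sub (outerM_isHermitian _))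
      _ = traceNorm (outerM ((I2 ⊗ₖ K0 φ₁ θ₁).mulVec wd) - outerM ((I2 ⊗ₖ K0 φ₂ θ₂).mulVec wd)) +
          traceNorm (outerM ((I2 ⊗ₖ K1 φ₁ θ₁).mulVec wd) - outerM ((I2 ⊗ₖ K1 φ₂ θ₂).mulVec wd)) := by
          rw [tnA, tnB]
      _ = traceNorm
          ((outerM ((I2 ⊗ₖ K0 φ₁ θ₁).mulVec wd) - outerM ((I2 ⊗ₖ K0 φ₂ θ₂).mulVec wd)) +
           (outerM ((I2 ⊗ₖ K1 φ₁ θ₁).mulVec wd) - outerM ((I2 ⊗ₖ K1 φ₂ θ₂).mulVec wd))) :=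
          hblock.symm

end App

theorem S2_reduces_to_diag_subspace
    (θ₁ φ₁ θ₂ φ₂ : ℝ)
    (hθ₁ : θ₁ ∈ Set.Icc 0 Real.pi) (hφ₁ : φ₁ ∈ Set.Icc 0 Real.pi)
    (hθ₂ : θ₂ ∈ Set.Icc 0 Real.pi) (hφ₂ : φ₂ ∈ Set.Icc 0 Real.pi) :
    S2 φ₁ θ₁ φ₂ θ₂ =
      ⨆ a : {a : ℂ × ℂ // ‖a.1‖ ^ 2 + ‖a.2‖ ^ 2 = 1},
        traceNorm (chanE φ₁ θ₁ (outer4 (wDiag a.1.1 a.1.2)) -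
          chanE φ₂ θ₂ (outer4 (wDiag a.1.1 a.1.2))) := by
  classical
  haveI hne1 : Nonempty {w : EuclideanSpace ℂ (Fin 2 × Fin 2) // ‖w‖ = 1} :=
    ⟨⟨EuclideanSpace.single ((0 : Fin 2), (0 : Fin 2)) (1 : ℂ), by
      rw [EuclideanSpace.norm_single]; simp⟩⟩
  haveI hne2 : Nonempty {a : ℂ × ℂ // ‖a.1‖ ^ 2 + ‖a.2‖ ^ 2 = 1} :=
    ⟨⟨(1, 0), by simp⟩⟩
  have hbdd1 : BddAbove (Set.range fun w : {w : EuclideanSpace ℂ (Fin 2 × Fin 2) // ‖w‖ = 1} =>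
      traceNorm (chanE φ₁ θ₁ (outer4 w.1) - chanE φ₂ θ₂ (outer4 w.1))) := by
    refine ⟨64, ?_⟩
    rintro x ⟨w, rfl⟩
    exact chanE_diff_bound φ₁ θ₁ φ₂ θ₂ w.1 (unit_abs_le w.1 w.2)
  have hbdd2 : BddAbove (Set.range fun a : {a : ℂ × ℂ // ‖a.1‖ ^ 2 + ‖a.2‖ ^ 2 = 1} =>
      traceNorm (chanE φ₁ θ₁ (outer4 (wDiag a.1.1 a.1.2)) -
        chanE φ₂ θ₂ (outer4 (wDiag a.1.1 a.1.2)))) := by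
    refine ⟨64, ?_⟩
    rintro x ⟨a, rfl⟩
    exact chanE_diff_bound φ₁ θ₁ φ₂ θ₂ _ (wDiag_abs_le a.2)
  rw [S2]
  apply le_antisymm
  · refine ciSup_le ?_
    rintro ⟨w, hw⟩
    obtain ⟨a, ha, hle⟩ := key θ₁ φ₁ θ₂ φ₂ w hw
    exact hle.trans (le_ciSup hbdd2 (⟨a, ha⟩ : {a : ℂ × ℂ // ‖a.1‖ ^ 2 + ‖a.2‖ ^ 2 = 1}))
  · refine ciSup_le ?_
    rintro ⟨a, ha⟩
    exact le_ciSup hbdd1 (⟨wDiag a.1 a.2, norm_wDiag ha⟩ :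
      {w : EuclideanSpace ℂ (Fin 2 × Fin 2) // ‖w‖ = 1})
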